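/- For binary increasing trees of size n, the number of trees whose min-path has exactly 2 nodes equals the (n-1)-st Euler number e_{n-1}; equivalently, the first column (m = 2) of the table of |res_{n,m}| consists of the Euler numbers 1, 1, 1, 2, 5, 16, 61, 272, 1385, .... -/

import Mathlib

namespace Andre

/-- Plane binary trees with natural-number labels; `nil` is the empty tree. -/
inductive PTree where
  | nil : PTree
  | node (lab : ℕ) (l r : PTree) : PTree
deriving DecidableEq

namespace PTree

def size : PTree → ℕ
  | nil => 0
  | node _ l r => l.size + r.size + 1

def labels : PTree → Finset ℕ
  | nil => ∅
  | node a l r => insert a (l.labels ∪ r.labels)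

def rootLabel : PTree → ℕ
  | nil => 0
  | node a _ _ => a

def Increasing : PTree → Prop
  | nil => True
  | node a l r => (∀ b ∈ l.labels, a < b) ∧ (∀ b ∈ r.labels, a < b) ∧ l.Increasing ∧ r.Increasing

/-- `t` is a binary increasing tree on the label set {1,…,n}. -/
def IsBIT (n : ℕ) (t : PTree) : Prop :=
  t.Increasing ∧ t.size = n ∧ t.labels = Finset.Icc 1 n

/-- standard drawing (a1),(a2): an only child is on the right, and of two
children the one with the smaller label is on the left. -/
def StdOriented : PTree → Prop
  | nil => True
  | node _ l r => (r = nil → l = nil) ∧ (l ≠ nil → r ≠ nil → l.rootLabel < r.rootLabel)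
      ∧ l.StdOriented ∧ r.StdOriented

/-- left-oriented drawing: an only child is on the left, and of two
children the one with the smaller label is on the left. -/
def LeftOriented : PTree → Prop
  | nil => True
  | node _ l r => (l = nil → r = nil) ∧ (l ≠ nil → r ≠ nil → l.rootLabel < r.rootLabel)
      ∧ l.LeftOriented ∧ r.LeftOriented

/-- strictly binary: no node has outdegree one. -/
def Strict : PTree → Prop
  | nil => True
  | node _ l r => (l = nil ↔ r = nil) ∧ l.Strict ∧ r.Strict

/-- the collapsing procedure φ: repeatedly collapsing leaves into their parents
produces exactly the in-order reading word of the plane-drawn tree. -/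
def phi : PTree → List ℕ
  | nil => []
  | node a l r => phi l ++ a :: phi r

/-- `Sim t t'` means `t` and `t'` are two plane drawings of the same
(unordered) labelled tree. -/
inductive Sim : PTree → PTree → Prop
  | nil : Sim nil nil
  | node {a : ℕ} {l r l' r' : PTree} : Sim l l' → Sim r r' → Sim (node a l r) (node a l' r')
  | swap {a : ℕ} {l r l' r' : PTree} : Sim l r' → Sim r l' → Sim (node a l r) (node a l' r')

/-- number of nodes of outdegree 0. -/
def leaves : PTree → ℕ
  | nil => 0
  | node _ nil nil => 1
  | node _ l r => l.leaves + r.leaves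

/-- number of nodes of outdegree 1. -/
def deg1 : PTree → ℕ
  | nil => 0
  | node _ nil nil => 0
  | node _ nil r => 1 + r.deg1
  | node _ l nil => 1 + l.deg1
  | node _ l r => l.deg1 + r.deg1

/-- number of nodes of outdegree 2. -/
def deg2 : PTree → ℕ
  | nil => 0
  | node _ nil nil => 0
  | node _ nil r => r.deg2
  | node _ l nil => l.deg2
  | node _ l r => 1 + l.deg2 + r.deg2

/-- length of the min-path: start from the root and at each step move to the
child with the least label. -/
def minPathLen : PTree → ℕ
  | nil => 0
  | node _ nil nil => 1
  | node _ nil r => 1 + r.minPathLen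
  | node _ l nil => 1 + l.minPathLen
  | node _ l r => 1 + (if l.rootLabel ≤ r.rootLabel then l.minPathLen else r.minPathLen)

/-- set of labels on the min-path. -/
def minPathLabels : PTree → Finset ℕ
  | nil => ∅
  | node a nil nil => {a}
  | node a nil r => insert a r.minPathLabels
  | node a l nil => insert a l.minPathLabels
  | node a l r => insert a (if l.rootLabel ≤ r.rootLabel then l.minPathLabels else r.minPathLabels)

/-- length of the max-path: start from the root and, while the current node
has outdegree two, move to the child with the larger label. -/
def maxPathLen : PTree → ℕ
  | nil => 0
  | node _ nil _ => 1
  | node _ _ nil => 1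
  | node _ l r => 1 + (if l.rootLabel ≤ r.rootLabel then r.maxPathLen else l.maxPathLen)

/-- set of labels on the max-path. -/
def maxPathLabels : PTree → Finset ℕ
  | nil => ∅
  | node a nil _ => {a}
  | node a _ nil => {a}
  | node a l r => insert a (if l.rootLabel ≤ r.rootLabel then r.maxPathLabels else l.maxPathLabels)

/-- labels on the path from the root to the leftmost leaf. -/
def leftmostPathLabels : PTree → Finset ℕ
  | nil => ∅
  | node a nil nil => {a}
  | node a nil r => insert a r.leftmostPathLabels
  | node a l _ => insert a l.leftmostPathLabels

/-- labels of nodes reachable from the root by performing only right steps. -/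
def rightSpineLabels : PTree → Finset ℕ
  | nil => ∅
  | node a _ r => insert a r.rightSpineLabels

end PTree

/-- left-to-right minima of a word. -/
def leftToRightMinima (l : List ℕ) : Set ℕ :=
  {x | ∃ i : Fin l.length, l.get i = x ∧ ∀ j : Fin l.length, (j : ℕ) < (i : ℕ) → x < l.get j}

/-- right-to-left minima of a word. -/
def rightToLeftMinima (l : List ℕ) : Set ℕ :=
  {x | ∃ i : Fin l.length, l.get i = x ∧ ∀ j : Fin l.length, (i : ℕ) < (j : ℕ) → x < l.get j}

/-- a word is up-down (alternating): l₀ < l₁ > l₂ < l₃ > ⋯ . -/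
def IsUpDown (l : List ℕ) : Prop :=
  ∀ i : ℕ, i + 1 < l.length →
    (i % 2 = 0 → l.getD i 0 < l.getD (i + 1) 0) ∧ (i % 2 = 1 → l.getD (i + 1) 0 < l.getD i 0)

/-- the n-th Euler number: the number of up-down (alternating) permutations of {1,…,n}. -/
noncomputable def eulerNumber (n : ℕ) : ℕ :=
  {l : List ℕ | l.Perm (List.range' 1 n) ∧ IsUpDown l}.ncard

/-- the Euler numbers as indexed in the paper: e₁ = e₂ = e₃ = 1, e₄ = 2, e₅ = 5, e₆ = 16, … -/
noncomputable def paperEuler (n : ℕ) : ℕ := eulerNumber (n - 1)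

/-- the number of binary increasing trees of size n (each counted once, via its
unique standard drawing). -/
noncomputable def treeCount (n : ℕ) : ℕ :=
  {t : PTree | PTree.IsBIT n t ∧ PTree.StdOriented t}.ncard

/-- number of binary increasing trees of size n whose min-path has m nodes. -/
noncomputable def minPathCount (n m : ℕ) : ℕ :=
  {t : PTree | PTree.IsBIT n t ∧ PTree.StdOriented t ∧ t.minPathLen = m}.ncard

/-- number of binary increasing trees of size n whose max-path has r nodes. -/
noncomputable def maxPathCount (n r : ℕ) : ℕ :=
  {t : PTree | PTree.IsBIT n t ∧ PTree.StdOriented t ∧ t.maxPathLen = r}.ncard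

/-- σ is a restriction of π: σ is obtained from π by keeping only the entries 1,…,k. -/
def IsRestriction (σ π : List ℕ) : Prop :=
  ∃ k, 1 ≤ k ∧ k ≤ π.length ∧ σ = π.filter (fun x => decide (x ≤ k))

/-- σ ∈ res_n(Ã): σ has size n and is a restriction of an André permutation of
the second kind associated with a strictly binary increasing tree. -/
def InRes (n : ℕ) (σ : List ℕ) : Prop :=
  σ.length = n ∧
  ∃ (m : ℕ) (t : PTree), PTree.IsBIT m t ∧ PTree.StdOriented t ∧ PTree.Strict t ∧
    IsRestriction σ (PTree.phi t)

/-- outdegree of the node labelled v in t (0 if absent). -/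
def outdeg (v : ℕ) : PTree → ℕ
  | PTree.nil => 0
  | PTree.node a l r =>
      (if a = v then (if l = PTree.nil then 0 else 1) + (if r = PTree.nil then 0 else 1) else 0)
      + outdeg v l + outdeg v r

/-- the construction Θ: attach a new node labelled `newLab` as a child of the node
labelled `v`, redrawing in the standard way. -/
def addNode (v newLab : ℕ) : PTree → PTree
  | PTree.nil => PTree.nil
  | PTree.node a l r =>
      if a = v then
        match l, r with
        | PTree.nil, PTree.nil =>
            PTree.node a PTree.nil (PTree.node newLab PTree.nil PTree.nil)
        | PTree.nil, c => PTree.node a c (PTree.node newLab PTree.nil PTree.nil)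
        | c, PTree.nil => PTree.node a c (PTree.node newLab PTree.nil PTree.nil)
        | _, _ => PTree.node a l r
      else PTree.node a (addNode v newLab l) (addNode v newLab r)

/-!
Root 1 of a tree counted by `minPathCount n 2` has the leaf 2 as its smaller child, so these
trees are the binary increasing trees on `{3, …, n}` with 1 and 2 attached on top. It remains to
count binary increasing trees on a label set `S`. Splitting off the root `x = min S` and recording
its two subtrees in both orders gives `2 t(S) = ∑_{A ⊆ S \ {x}} t(A) t(S \ {x} \ A)` whenever
`|S| ≥ 2`. Up-down permutations satisfy the same recurrence: splitting at the least letter writes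
an up-down or a down-up word as `u x v` with `u`, `v` alternating of the appropriate kind, and
the order-reversing involution of a set shows that it has as many down-up as up-down
arrangements. The two counts agree on sets with at most one element, hence everywhere.
-/

lemma eq_of_two_mul_insert_eq_sum {α : Type*} [LinearOrder α] {f g : Finset α → ℕ}
    (h₀ : f ∅ = g ∅) (h₁ : ∀ x, f {x} = g {x})
    (hf : ∀ x S, S.Nonempty → (∀ y ∈ S, x < y) →
      2 * f (insert x S) = ∑ A ∈ S.powerset, f A * f (S \ A))
    (hg : ∀ x S, S.Nonempty → (∀ y ∈ S, x < y) →
      2 * g (insert x S) = ∑ A ∈ S.powerset, g A * g (S \ A)) :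
    f = g := by
  funext T
  induction T using Finset.strongInduction with
  | H T ih =>
    rcases T.eq_empty_or_nonempty with rfl | hT
    · exact h₀
    set x := T.min' hT
    set S := T.erase x
    have hxS : ∀ y ∈ S, x < y := fun y hy => T.min'_lt_of_mem_erase_min' hT hy
    have hT' : T = insert x S := (Finset.insert_erase (T.min'_mem hT)).symm
    rcases S.eq_empty_or_nonempty with hS | hS
    · rw [hT', hS]
      exact h₁ x
    have hST : S ⊂ T := Finset.erase_ssubset (T.min'_mem hT)
    have hsum : ∑ A ∈ S.powerset, f A * f (S \ A) = ∑ A ∈ S.powerset, g A * g (S \ A) :=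
      Finset.sum_congr rfl fun A hA => by
        rw [Finset.mem_powerset] at hA
        rw [ih A (hA.trans_ssubset hST), ih (S \ A) (Finset.sdiff_subset.trans_ssubset hST)]
    have := hf x S hS hxS
    have := hg x S hS hxS
    rw [hT']
    omega

lemma _root_.Finset.val_eq_coe_iff {α : Type*} [DecidableEq α] {S : Finset α} {l : List α} :
    S.val = l ↔ l.Nodup ∧ l.toFinset = S := by
  constructor
  · intro h
    have hnd : l.Nodup := Multiset.coe_nodup.mp (h ▸ S.nodup)
    exact ⟨hnd, by ext; simp [← Finset.mem_val, h]⟩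
  · rintro ⟨hnd, rfl⟩
    simp [List.toFinset_val, hnd.dedup]

/-- `Zigzag true l` says `l₀ < l₁ > l₂ < ⋯` (up-down), `Zigzag false l` says `l₀ > l₁ < l₂ > ⋯`
(down-up). -/
def Zigzag : Bool → List ℕ → Prop
  | up, a :: b :: l => (if up then a < b else b < a) ∧ Zigzag (!up) (b :: l)
  | _, _ => True

namespace Zigzag

@[simp] lemma nil (up : Bool) : Zigzag up [] := trivial

@[simp] lemma singleton (up : Bool) (a : ℕ) : Zigzag up [a] := trivial

@[simp] lemma cons_cons {up : Bool} {a b : ℕ} {l : List ℕ} :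
    Zigzag up (a :: b :: l) ↔ (if up then a < b else b < a) ∧ Zigzag (!up) (b :: l) :=
  Iff.rfl

lemma iff_getD {up : Bool} {l : List ℕ} :
    Zigzag up l ↔ ∀ i, i + 1 < l.length →
      ((i % 2 = 0 ↔ up) → l.getD i 0 < l.getD (i + 1) 0) ∧
      ((i % 2 = 0 ↔ up = false) → l.getD (i + 1) 0 < l.getD i 0) := by
  induction l generalizing up with
  | nil => simp
  | cons a l ih =>
    cases l with
    | nil => simp
    | cons b l =>
      rw [cons_cons, ih]
      constructor
      · rintro ⟨hab, h⟩ (_ | i) hi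
        · cases up <;> simp_all
        · have := h i (by simpa using hi)
          cases up <;> simp_all [Nat.succ_mod_two_eq_zero_iff]
      · intro h
        refine ⟨?_, fun i hi => ?_⟩
        · have := h 0 (by simp)
          cases up <;> simp_all
        · have := h (i + 1) (by simpa using hi)
          cases up <;> simp_all [Nat.succ_mod_two_eq_zero_iff]

variable {f : ℕ → ℕ} {s : Set ℕ}

lemma map_iff_of_strictMonoOn (hf : StrictMonoOn f s) {up : Bool} {l : List ℕ}
    (hl : ∀ a ∈ l, a ∈ s) : Zigzag up (l.map f) ↔ Zigzag up l := by
  induction l generalizing up with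
  | nil => simp
  | cons a l ih =>
    cases l with
    | nil => simp
    | cons b l =>
      have ha := hl a (by simp)
      have hb := hl b (by simp)
      simp only [List.map_cons, cons_cons, hf.lt_iff_lt ha hb, hf.lt_iff_lt hb ha]
      rw [← List.map_cons, ih fun c hc => hl c (List.mem_cons_of_mem a hc)]

lemma map_iff_of_strictAntiOn (hf : StrictAntiOn f s) {up : Bool} {l : List ℕ}
    (hl : ∀ a ∈ l, a ∈ s) : Zigzag (!up) (l.map f) ↔ Zigzag up l := by
  induction l generalizing up with
  | nil => simp
  | cons a l ih =>
    cases l with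
    | nil => simp
    | cons b l =>
      have ha := hl a (by simp)
      have hb := hl b (by simp)
      simp only [List.map_cons, cons_cons, hf.lt_iff_gt ha hb, hf.lt_iff_gt hb ha]
      rw [← List.map_cons, ih fun c hc => hl c (List.mem_cons_of_mem a hc)]
      cases up <;> simp

variable {x : ℕ} {u v : List ℕ}

lemma true_cons_iff_of_lt (hv : ∀ y ∈ v, x < y) : Zigzag true (x :: v) ↔ Zigzag false v := by
  cases v with
  | nil => simp
  | cons c v => simp [hv c (by simp)]

lemma not_false_cons_of_lt (hv : ∀ y ∈ v, x < y) (hne : v ≠ []) : ¬Zigzag false (x :: v) := by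
  cases v with
  | nil => exact absurd rfl hne
  | cons c v => simp [(hv c (by simp)).le]

lemma append_cons_iff_of_lt (up : Bool) (hu : ∀ y ∈ u, x < y) (hv : ∀ y ∈ v, x < y)
    (hne : u ≠ [] ∨ v ≠ []) :
    Zigzag up (u ++ x :: v) ↔ (Even u.length ↔ up) ∧ Zigzag up u ∧ Zigzag false v := by
  induction u generalizing up with
  | nil =>
    cases up
    · simp [not_false_cons_of_lt hv (by simpa using hne)]
    · simp [true_cons_iff_of_lt hv]
  | cons a u ih =>
    have hxa : x < a := hu a (by simp)
    cases u with
    | nil => cases up <;> simp [hxa, hxa.not_gt, true_cons_iff_of_lt hv]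
    | cons b u =>
      simp only [List.cons_append, cons_cons, List.length_cons]
      rw [← List.cons_append, ih (!up) (fun y hy => hu y (List.mem_cons_of_mem a hy)) (by simp)]
      cases up <;>
        simp only [Bool.false_eq_true, Bool.not_false, Bool.not_true, ↓reduceIte,
          List.length_cons, Nat.even_add_one, Nat.not_even_iff_odd, Nat.not_odd_iff_even, iff_true,
          iff_false] <;>
        tauto

end Zigzag

lemma isUpDown_iff_zigzag {l : List ℕ} : IsUpDown l ↔ Zigzag true l := by
  simp [IsUpDown, Zigzag.iff_getD]

open scoped Classical in
noncomputable def zigzagPerms (up : Bool) (S : Finset ℕ) : Finset (List ℕ) :=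
  S.val.lists.toFinset.filter (Zigzag up)

lemma mem_zigzagPerms {up : Bool} {S : Finset ℕ} {l : List ℕ} :
    l ∈ zigzagPerms up S ↔ (l.Nodup ∧ l.toFinset = S) ∧ Zigzag up l := by
  simp [zigzagPerms, Finset.val_eq_coe_iff]

lemma zigzagPerms_empty (up : Bool) : zigzagPerms up ∅ = {[]} := by
  ext l
  simpa [zigzagPerms, eq_comm] using fun h : l = [] => h ▸ Zigzag.nil up

lemma zigzagPerms_singleton (up : Bool) (x : ℕ) : zigzagPerms up {x} = {[x]} := by
  ext l
  simpa [zigzagPerms, eq_comm (a := ({x} : Multiset ℕ))] using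
    fun h : l = [x] => h ▸ Zigzag.singleton up x

lemma nodup_toFinset_map {S : Finset ℕ} {f : ℕ → ℕ} {l : List ℕ}
    (hl : l.Nodup ∧ l.toFinset = S) (hf : Set.InjOn f S) :
    (l.map f).Nodup ∧ (l.map f).toFinset = S.image f := by
  obtain ⟨hnd, rfl⟩ := hl
  refine ⟨hnd.map_on fun a ha b hb => hf (by simpa using ha) (by simpa using hb), ?_⟩
  ext
  simp

lemma card_zigzagPerms_congr {up up' : Bool} {S T : Finset ℕ} {f g : ℕ → ℕ}
    (hf : ∀ a ∈ S, f a ∈ T) (hg : ∀ b ∈ T, g b ∈ S)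
    (hgf : ∀ a ∈ S, g (f a) = a) (hfg : ∀ b ∈ T, f (g b) = b)
    (hzz : ∀ l : List ℕ, (∀ a ∈ l, a ∈ S) → (Zigzag up' (l.map f) ↔ Zigzag up l)) :
    (zigzagPerms up S).card = (zigzagPerms up' T).card := by
  have hfS : S.image f = T := by
    ext b
    simp only [Finset.mem_image]
    exact ⟨fun ⟨a, ha, hab⟩ => hab ▸ hf a ha, fun hb => ⟨g b, hg b hb, hfg b hb⟩⟩
  have hgT : T.image g = S := by
    ext a
    simp only [Finset.mem_image]
    exact ⟨fun ⟨b, hb, hba⟩ => hba ▸ hg b hb, fun ha => ⟨f a, hf a ha, hgf a ha⟩⟩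
  have hmem {up : Bool} {S : Finset ℕ} {l} (hl : l ∈ zigzagPerms up S) : ∀ a ∈ l, a ∈ S :=
    fun a ha => (mem_zigzagPerms.mp hl).1.2 ▸ List.mem_toFinset.mpr ha
  have hcancel {f g : ℕ → ℕ} {S : Finset ℕ} (h : ∀ a ∈ S, g (f a) = a) {l : List ℕ}
      (hl : ∀ a ∈ l, a ∈ S) : (l.map f).map g = l := by
    rw [List.map_map]
    exact (List.map_congr_left fun a ha => h a (hl a ha)).trans (List.map_id l)
  apply Finset.card_nbij' (List.map f) (List.map g)
  · intro l hl
    rw [Finset.mem_coe, mem_zigzagPerms] at hl ⊢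
    rw [← hfS]
    exact ⟨nodup_toFinset_map hl.1 (Set.LeftInvOn.injOn hgf),
      (hzz l fun a ha => hl.1.2 ▸ List.mem_toFinset.mpr ha).mpr hl.2⟩
  · intro l hl
    have hlT := hmem hl
    have hgl : ∀ a ∈ l.map g, a ∈ S := by
      simp only [List.mem_map]
      rintro _ ⟨b, hb, rfl⟩
      exact hg b (hlT b hb)
    rw [Finset.mem_coe, mem_zigzagPerms] at hl ⊢
    rw [← hgT]
    exact ⟨nodup_toFinset_map hl.1 (Set.LeftInvOn.injOn hfg),
      (hzz _ hgl).mp (by rw [hcancel hfg hlT]; exact hl.2)⟩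
  · exact fun l hl => hcancel hgf (hmem hl)
  · exact fun l hl => hcancel hfg (hmem hl)

/-- The order-reversing involution of `S`, extended by the identity. -/
noncomputable def reverseOn (S : Finset ℕ) (a : ℕ) : ℕ :=
  if h : a ∈ S then S.orderIsoOfFin rfl ((S.orderIsoOfFin rfl).symm ⟨a, h⟩).rev else a

lemma reverseOn_mem {S : Finset ℕ} {a : ℕ} (ha : a ∈ S) : reverseOn S a ∈ S := by
  simp [reverseOn, ha]

lemma reverseOn_reverseOn {S : Finset ℕ} {a : ℕ} (ha : a ∈ S) :
    reverseOn S (reverseOn S a) = a := by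
  simp only [reverseOn, ha, dite_true, Finset.coe_mem, Subtype.coe_eta,
    OrderIso.symm_apply_apply, Fin.rev_rev, OrderIso.apply_symm_apply]

lemma strictAntiOn_reverseOn (S : Finset ℕ) : StrictAntiOn (reverseOn S) S := by
  intro a ha b hb hab
  simp only [reverseOn, Finset.mem_coe.mp ha, Finset.mem_coe.mp hb, dite_true,
    Subtype.coe_lt_coe, OrderIso.lt_iff_lt, Fin.rev_lt_rev]
  exact hab

lemma card_zigzagPerms_false (S : Finset ℕ) :
    (zigzagPerms false S).card = (zigzagPerms true S).card :=
  card_zigzagPerms_congr (f := reverseOn S) (g := reverseOn S)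
    (fun _ => reverseOn_mem) (fun _ => reverseOn_mem)
    (fun _ => reverseOn_reverseOn) (fun _ => reverseOn_reverseOn)
    (fun _ hl => Zigzag.map_iff_of_strictAntiOn (up := false) (strictAntiOn_reverseOn S) hl)

lemma card_zigzagPerms_Icc_add (up : Bool) (a b c : ℕ) :
    (zigzagPerms up (Finset.Icc a b)).card =
      (zigzagPerms up (Finset.Icc (a + c) (b + c))).card :=
  card_zigzagPerms_congr (f := (· + c)) (g := (· - c))
    (fun a ha => by simp only [Finset.mem_Icc] at ha ⊢; omega)
    (fun a ha => by simp only [Finset.mem_Icc] at ha ⊢; omega)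
    (fun a _ => Nat.add_sub_cancel a c)
    (fun a ha => by simp only [Finset.mem_Icc] at ha; omega)
    (fun _ _ => Zigzag.map_iff_of_strictMonoOn (add_left_strictMono.strictMonoOn Set.univ)
      (fun a _ => Set.mem_univ a))

lemma nodup_toFinset_append_cons_iff {u v : List ℕ} {x : ℕ} {S : Finset ℕ} (hx : x ∉ S) :
    ((u ++ x :: v).Nodup ∧ (u ++ x :: v).toFinset = insert x S) ↔
      u.toFinset ⊆ S ∧ u.Nodup ∧ v.Nodup ∧ v.toFinset = S \ u.toFinset := by
  simp only [List.nodup_append, List.nodup_cons, Finset.ext_iff, Finset.subset_iff,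
    List.mem_toFinset, Finset.mem_insert, Finset.mem_sdiff, List.mem_append, List.mem_cons]
  grind

lemma append_cons_mem_zigzagPerms_insert_iff (up : Bool) {x : ℕ} {S : Finset ℕ}
    (hS : S.Nonempty) (hx : ∀ y ∈ S, x < y) {u v : List ℕ} :
    u ++ x :: v ∈ zigzagPerms up (insert x S) ↔
      (u.toFinset ⊆ S ∧ (Even u.toFinset.card ↔ up)) ∧ u ∈ zigzagPerms up u.toFinset ∧
        v ∈ zigzagPerms false (S \ u.toFinset) := by
  have hlt {l : List ℕ} (hl : l.toFinset ⊆ S) : ∀ y ∈ l, x < y :=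
    fun y hy => hx y (hl (List.mem_toFinset.mpr hy))
  have hne {u v : List ℕ} (hv : v.toFinset = S \ u.toFinset) : u ≠ [] ∨ v ≠ [] := by
    by_contra! h
    obtain ⟨rfl, rfl⟩ := h
    simp only [List.toFinset_nil, Finset.sdiff_empty] at hv
    exact hS.ne_empty hv.symm
  rw [mem_zigzagPerms, nodup_toFinset_append_cons_iff fun h => lt_irrefl x (hx x h),
    mem_zigzagPerms, mem_zigzagPerms]
  constructor
  · rintro ⟨⟨huS, hu, hv, hvS⟩, hz⟩
    obtain ⟨hpar, hzu, hzv⟩ := (Zigzag.append_cons_iff_of_lt up (hlt huS)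
      (hlt (hvS ▸ Finset.sdiff_subset)) (hne hvS)).mp hz
    rw [List.toFinset_card_of_nodup hu]
    exact ⟨⟨huS, hpar⟩, ⟨⟨hu, rfl⟩, hzu⟩, ⟨hv, hvS⟩, hzv⟩
  · rintro ⟨⟨huS, hpar⟩, ⟨⟨hu, -⟩, hzu⟩, ⟨hv, hvS⟩, hzv⟩
    rw [List.toFinset_card_of_nodup hu] at hpar
    exact ⟨⟨huS, hu, hv, hvS⟩, (Zigzag.append_cons_iff_of_lt up (hlt huS)
      (hlt (hvS ▸ Finset.sdiff_subset)) (hne hvS)).mpr ⟨hpar, hzu, hzv⟩⟩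

lemma card_zigzagPerms_insert (up : Bool) {x : ℕ} {S : Finset ℕ} (hS : S.Nonempty)
    (hx : ∀ y ∈ S, x < y) :
    (zigzagPerms up (insert x S)).card = ∑ A ∈ S.powerset with (Even A.card ↔ up),
      (zigzagPerms up A).card * (zigzagPerms false (S \ A)).card := by
  have hsplit {u v : List ℕ} := append_cons_mem_zigzagPerms_insert_iff up hS hx (u := u) (v := v)
  have hxS : x ∉ S := fun h => lt_irrefl x (hx x h)
  simp_rw [← Finset.card_product, ← Finset.card_sigma]
  symm
  refine Finset.card_bij (fun p _ => p.2.1 ++ x :: p.2.2) ?_ ?_ ?_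
  · rintro ⟨A, u, v⟩ hp
    simp only [Finset.mem_sigma, Finset.mem_filter, Finset.mem_powerset, Finset.mem_product] at hp
    obtain ⟨hA, hu, hv⟩ := hp
    obtain rfl : u.toFinset = A := (mem_zigzagPerms.mp hu).1.2
    exact hsplit.mpr ⟨hA, hu, hv⟩
  · rintro ⟨A, u, v⟩ hp ⟨A', u', v'⟩ hp' h
    simp only [Finset.mem_sigma, Finset.mem_filter, Finset.mem_powerset, Finset.mem_product,
      mem_zigzagPerms] at hp hp'
    obtain ⟨⟨hAS, -⟩, ⟨⟨-, rfl⟩, -⟩, ⟨-, hvA⟩, -⟩ := hp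
    obtain ⟨-, ⟨⟨-, rfl⟩, -⟩, -⟩ := hp'
    obtain ⟨rfl, -, rfl⟩ := (List.append_cons_inj_of_notMem
      (fun h => hxS (hAS (List.mem_toFinset.mpr h)))
      (fun h => hxS (Finset.sdiff_subset (hvA ▸ List.mem_toFinset.mpr h)))).mp h
    rfl
  · intro w hw
    obtain ⟨u, v, rfl⟩ := List.append_of_mem
      (List.mem_toFinset.mp ((mem_zigzagPerms.mp hw).1.2 ▸ Finset.mem_insert_self x S))
    refine ⟨⟨u.toFinset, u, v⟩, ?_, rfl⟩
    simpa [Finset.mem_sigma, Finset.mem_filter, Finset.mem_powerset, Finset.mem_product]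
      using hsplit.mp hw

lemma two_mul_card_zigzagPerms_insert {x : ℕ} {S : Finset ℕ} (hS : S.Nonempty)
    (hx : ∀ y ∈ S, x < y) :
    2 * (zigzagPerms true (insert x S)).card =
      ∑ A ∈ S.powerset, (zigzagPerms true A).card * (zigzagPerms true (S \ A)).card := by
  have hup := card_zigzagPerms_insert true hS hx
  have hdown := card_zigzagPerms_insert false hS hx
  simp only [card_zigzagPerms_false, Bool.false_eq_true, iff_true, iff_false] at hup hdown
  rw [← Finset.sum_filter_add_sum_filter_not S.powerset (fun A => Even A.card), ← hup, ← hdown,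
    two_mul]

lemma eulerNumber_eq_card_zigzagPerms (k : ℕ) :
    eulerNumber k = (zigzagPerms true (Finset.Icc 1 k)).card := by
  have hIcc : (Finset.Icc 1 k).val = List.range' 1 k := by
    rw [Nat.Icc_eq_range', Nat.add_sub_cancel]
  rw [eulerNumber, ← Set.ncard_coe_finset]
  congr 1
  ext l
  rw [Set.mem_ofPred_eq, Finset.mem_coe, mem_zigzagPerms, ← isUpDown_iff_zigzag,
    ← Finset.val_eq_coe_iff, hIcc, Multiset.coe_eq_coe, List.perm_comm]

namespace PTree

def RootOrdered (l r : PTree) : Prop :=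
  (r = nil → l = nil) ∧ (l ≠ nil → r ≠ nil → l.rootLabel < r.rootLabel)

instance (l r : PTree) : Decidable (l.RootOrdered r) := by
  unfold RootOrdered
  infer_instance

lemma increasing_node {a : ℕ} {l r : PTree} :
    (node a l r).Increasing ↔
      (∀ b ∈ l.labels ∪ r.labels, a < b) ∧ l.Increasing ∧ r.Increasing := by
  simp [Increasing, or_imp, forall_and, and_assoc]

lemma stdOriented_node {a : ℕ} {l r : PTree} :
    (node a l r).StdOriented ↔ RootOrdered l r ∧ l.StdOriented ∧ r.StdOriented := by
  simp [StdOriented, RootOrdered, and_assoc]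

lemma rootLabel_mem_labels {t : PTree} (ht : t ≠ nil) : t.rootLabel ∈ t.labels := by
  cases t with
  | nil => exact absurd rfl ht
  | node a l r => simp [rootLabel, labels]

lemma rootLabel_le_of_mem_labels {t : PTree} (ht : t.Increasing) {b : ℕ} (hb : b ∈ t.labels) :
    t.rootLabel ≤ b := by
  cases t with
  | nil => simp [labels] at hb
  | node a l r =>
    rw [increasing_node] at ht
    rw [labels, Finset.mem_insert] at hb
    rcases hb with rfl | hb
    · exact le_rfl
    · exact (ht.1 b hb).le

lemma card_labels_le_size (t : PTree) : t.labels.card ≤ t.size := by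
  induction t with
  | nil => simp [labels, size]
  | node a l r ihl ihr =>
    calc (node a l r).labels.card ≤ (l.labels ∪ r.labels).card + 1 := Finset.card_insert_le _ _
      _ ≤ l.labels.card + r.labels.card + 1 := by grw [Finset.card_union_le]
      _ ≤ (node a l r).size := by simp only [size]; omega

lemma rootOrdered_swap_iff {l r : PTree} (hne : l ≠ nil ∨ r ≠ nil)
    (hdisj : Disjoint l.labels r.labels) : RootOrdered r l ↔ ¬RootOrdered l r := by
  by_cases hl : l = nil
  · simp [RootOrdered, hl, hne.resolve_left (not_not.mpr hl)]
  by_cases hr : r = nil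
  · simp [RootOrdered, hl, hr]
  have hroot : l.rootLabel ≠ r.rootLabel := fun h =>
    Finset.disjoint_left.mp hdisj (rootLabel_mem_labels hl) (h ▸ rootLabel_mem_labels hr)
  simp only [RootOrdered, hl, hr, ne_eq, not_false_eq_true, forall_const, imp_false, true_and,
    not_lt]
  exact ⟨le_of_lt, fun h => lt_of_le_of_ne h hroot.symm⟩

def graft (a : ℕ) (l r : PTree) : PTree :=
  if l.RootOrdered r then node a l r else node a r l

lemma graft_injective (a : ℕ) (l : PTree) : Function.Injective (graft a l) := by
  intro r r' h
  unfold graft at h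
  split_ifs at h <;> simp_all

lemma minPathLen_node_pos (a : ℕ) (l r : PTree) : 0 < (node a l r).minPathLen := by
  cases l <;> cases r <;> simp [minPathLen]

lemma minPathLen_node_of_rootOrdered {a : ℕ} {l r : PTree} (h : l.RootOrdered r) :
    (node a l r).minPathLen = 1 + (if l = nil then r else l).minPathLen := by
  obtain ⟨hrl, hlt⟩ := h
  cases l with
  | nil => cases r <;> simp [minPathLen]
  | node b ll lr =>
    cases r with
    | nil => simp at hrl
    | node c rl rr =>
      have hbc : b < c := hlt (by simp) (by simp)
      simp [minPathLen, rootLabel, hbc.le]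

lemma minPathLen_eq_one_iff {t : PTree} : t.minPathLen = 1 ↔ ∃ b, t = node b nil nil := by
  constructor
  · intro h
    match t with
    | nil => simp [minPathLen] at h
    | node b nil nil => exact ⟨b, rfl⟩
    | node b nil (node c cl cr) | node b (node c cl cr) nil =>
      have := minPathLen_node_pos c cl cr
      simp only [minPathLen] at h
      omega
    | node b (node c cl cr) (node d dl dr) =>
      have := minPathLen_node_pos c cl cr
      have := minPathLen_node_pos d dl dr
      simp only [minPathLen] at h
      split_ifs at h <;> omega
  · rintro ⟨b, rfl⟩
    rfl

end PTree

def boundedTrees (S : Finset ℕ) : ℕ → Finset PTree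
  | 0 => {PTree.nil}
  | h + 1 => insert PTree.nil ((S ×ˢ boundedTrees S h ×ˢ boundedTrees S h).image
      fun p => PTree.node p.1 p.2.1 p.2.2)

lemma mem_boundedTrees {S : Finset ℕ} :
    ∀ {t : PTree} {h : ℕ}, t.labels ⊆ S → t.size ≤ h → t ∈ boundedTrees S h
  | .nil, 0, _, _ | .nil, _ + 1, _, _ => by simp [boundedTrees]
  | .node a l r, 0, _, hsize => by simp [PTree.size] at hsize
  | .node a l r, h + 1, hlab, hsize => by
    simp only [PTree.labels, Finset.insert_subset_iff, Finset.union_subset_iff] at hlab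
    simp only [PTree.size] at hsize
    simp only [boundedTrees, Finset.mem_insert, Finset.mem_image, Finset.mem_product]
    exact Or.inr ⟨(a, l, r), ⟨hlab.1, mem_boundedTrees (t := l) hlab.2.1 (by omega),
      mem_boundedTrees (t := r) hlab.2.2 (by omega)⟩, rfl⟩

open scoped Classical in
noncomputable def treesOn (S : Finset ℕ) : Finset PTree :=
  (boundedTrees S S.card).filter
    fun t => t.Increasing ∧ t.StdOriented ∧ t.labels = S ∧ t.size = S.card

lemma mem_treesOn {S : Finset ℕ} {t : PTree} :
    t ∈ treesOn S ↔ t.Increasing ∧ t.StdOriented ∧ t.labels = S ∧ t.size = S.card := by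
  simp only [treesOn, Finset.mem_filter, and_iff_right_iff_imp]
  rintro ⟨-, -, hlab, hsize⟩
  exact mem_boundedTrees hlab.le hsize.le

lemma isBIT_and_stdOriented_iff {n : ℕ} {t : PTree} :
    (t.IsBIT n ∧ t.StdOriented) ↔ t ∈ treesOn (Finset.Icc 1 n) := by
  simp only [PTree.IsBIT, mem_treesOn, Nat.card_Icc, Nat.add_sub_cancel]
  tauto

lemma nil_mem_treesOn_iff {S : Finset ℕ} : PTree.nil ∈ treesOn S ↔ S = ∅ := by
  simp [mem_treesOn, PTree.Increasing, PTree.StdOriented, PTree.labels, PTree.size, eq_comm]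

lemma node_mem_treesOn_iff {S : Finset ℕ} {a : ℕ} {l r : PTree} :
    PTree.node a l r ∈ treesOn S ↔
      (∀ b ∈ l.labels ∪ r.labels, a < b) ∧ l.RootOrdered r ∧ l ∈ treesOn l.labels ∧
        r ∈ treesOn r.labels ∧ Disjoint l.labels r.labels ∧ insert a (l.labels ∪ r.labels) = S := by
  simp only [mem_treesOn, PTree.increasing_node, PTree.stdOriented_node, PTree.labels,
    PTree.size, true_and]
  constructor
  · rintro ⟨⟨hlt, hl, hr⟩, ⟨hord, hls, hrs⟩, rfl, hsize⟩
    have ha : a ∉ l.labels ∪ r.labels := fun h => lt_irrefl a (hlt a h)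
    rw [Finset.card_insert_of_notMem ha] at hsize
    have := Finset.card_union_add_card_inter l.labels r.labels
    have := l.card_labels_le_size
    have := r.card_labels_le_size
    refine ⟨hlt, hord, ⟨hl, hls, by omega⟩, ⟨hr, hrs, by omega⟩,
      Finset.disjoint_iff_inter_eq_empty.mpr (Finset.card_eq_zero.mp (by omega)), rfl⟩
  · rintro ⟨hlt, hord, ⟨hl, hls, hlsize⟩, ⟨hr, hrs, hrsize⟩, hdisj, rfl⟩
    have ha : a ∉ l.labels ∪ r.labels := fun h => lt_irrefl a (hlt a h)
    refine ⟨⟨hlt, hl, hr⟩, ⟨hord, hls, hrs⟩, rfl, ?_⟩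
    rw [Finset.card_insert_of_notMem ha, Finset.card_union_of_disjoint hdisj]
    omega

lemma node_mem_treesOn_insert_iff {x a : ℕ} {S : Finset ℕ} {l r : PTree}
    (hx : ∀ y ∈ S, x < y) :
    PTree.node a l r ∈ treesOn (insert x S) ↔
      a = x ∧ l.RootOrdered r ∧ l ∈ treesOn l.labels ∧ r ∈ treesOn r.labels ∧
        Disjoint l.labels r.labels ∧ l.labels ∪ r.labels = S := by
  rw [node_mem_treesOn_iff]
  constructor
  · rintro ⟨hlt, hord, hl, hr, hdisj, hlab⟩
    have hax : a = x := by
      by_contra hne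
      have ha : a ∈ S :=
        (Finset.mem_insert.mp (hlab ▸ Finset.mem_insert_self a _)).resolve_left hne
      have hx' : x ∈ l.labels ∪ r.labels :=
        (Finset.mem_insert.mp (hlab ▸ Finset.mem_insert_self x S)).resolve_left (Ne.symm hne)
      exact lt_asymm (hx a ha) (hlt x hx')
    subst hax
    refine ⟨rfl, hord, hl, hr, hdisj, ?_⟩
    rw [← Finset.erase_insert (fun h => lt_irrefl a (hlt a h)), hlab,
      Finset.erase_insert (fun h => lt_irrefl a (hx a h))]
  · rintro ⟨rfl, hord, hl, hr, hdisj, rfl⟩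
    exact ⟨hx, hord, hl, hr, hdisj, rfl⟩

lemma treesOn_empty : treesOn ∅ = {PTree.nil} := by
  ext t
  cases t with
  | nil => simp [nil_mem_treesOn_iff]
  | node a l r => simp [mem_treesOn, PTree.labels]

lemma treesOn_singleton (x : ℕ) : treesOn {x} = {PTree.node x .nil .nil} := by
  ext t
  cases t with
  | nil => simp [nil_mem_treesOn_iff]
  | node a l r =>
    rw [← Finset.insert_empty, node_mem_treesOn_insert_iff (by simp), Finset.mem_singleton]
    constructor
    · rintro ⟨rfl, -, hl, hr, -, hlr⟩
      rw [Finset.union_eq_empty] at hlr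
      rw [hlr.1, treesOn_empty, Finset.mem_singleton] at hl
      rw [hlr.2, treesOn_empty, Finset.mem_singleton] at hr
      rw [hl, hr]
    · rintro ⟨⟩
      simp [PTree.labels, PTree.RootOrdered, treesOn_empty]

noncomputable def treePairs (S : Finset ℕ) : Finset (Σ _ : Finset ℕ, PTree × PTree) :=
  S.powerset.sigma fun A => treesOn A ×ˢ treesOn (S \ A)

section TreePairs

variable {S A : Finset ℕ} {l r : PTree}

lemma mem_treePairs :
    ⟨A, (l, r)⟩ ∈ treePairs S ↔ A ⊆ S ∧ l ∈ treesOn A ∧ r ∈ treesOn (S \ A) := by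
  simp [treePairs]

lemma card_treePairs (S : Finset ℕ) :
    (treePairs S).card = ∑ A ∈ S.powerset, (treesOn A).card * (treesOn (S \ A)).card := by
  simp [treePairs, Finset.card_sigma, Finset.card_product]

lemma labels_of_mem_treePairs (h : ⟨A, (l, r)⟩ ∈ treePairs S) :
    l.labels = A ∧ r.labels = S \ A :=
  ⟨(mem_treesOn.mp (mem_treePairs.mp h).2.1).2.2.1,
    (mem_treesOn.mp (mem_treePairs.mp h).2.2).2.2.1⟩

lemma rootOrdered_swap_iff_of_mem_treePairs (hS : S.Nonempty) (h : ⟨A, (l, r)⟩ ∈ treePairs S) :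
    r.RootOrdered l ↔ ¬l.RootOrdered r := by
  obtain ⟨hl, hr⟩ := labels_of_mem_treePairs h
  refine PTree.rootOrdered_swap_iff ?_ (hl ▸ hr ▸ Finset.disjoint_sdiff)
  by_contra! hnil
  obtain ⟨rfl, rfl⟩ := hnil
  simp only [PTree.labels] at hl hr
  subst hl
  rw [Finset.sdiff_empty] at hr
  exact hS.ne_empty hr.symm

lemma card_treesOn_insert {x : ℕ} (hx : ∀ y ∈ S, x < y) :
    (treesOn (insert x S)).card = ((treePairs S).filter fun p => p.2.1.RootOrdered p.2.2).card := by
  symm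
  refine Finset.card_bij (fun p _ => PTree.node x p.2.1 p.2.2) ?_ ?_ ?_
  · rintro ⟨A, l, r⟩ hp
    rw [Finset.mem_filter] at hp
    obtain ⟨hAS, hl, hr⟩ := mem_treePairs.mp hp.1
    obtain ⟨hlA, hrA⟩ := labels_of_mem_treePairs hp.1
    rw [node_mem_treesOn_insert_iff hx, hlA, hrA, Finset.union_sdiff_of_subset hAS]
    exact ⟨rfl, hp.2, hlA ▸ hl, hrA ▸ hr, Finset.disjoint_sdiff, rfl⟩
  · rintro ⟨A, l, r⟩ hp ⟨A', l', r'⟩ hp' h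
    obtain ⟨-, rfl, rfl⟩ := PTree.node.inj h
    obtain ⟨rfl, -⟩ := labels_of_mem_treePairs (Finset.mem_filter.mp hp).1
    obtain ⟨rfl, -⟩ := labels_of_mem_treePairs (Finset.mem_filter.mp hp').1
    rfl
  · intro t ht
    cases t with
    | nil => exact absurd (nil_mem_treesOn_iff.mp ht) (Finset.insert_ne_empty x S)
    | node a l r =>
      obtain ⟨rfl, hord, hl, hr, hdisj, hLR⟩ := (node_mem_treesOn_insert_iff hx).mp ht
      refine ⟨⟨l.labels, (l, r)⟩, ?_, rfl⟩
      rw [Finset.mem_filter, mem_treePairs, ← hLR, Finset.union_sdiff_cancel_left hdisj]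
      exact ⟨⟨Finset.subset_union_left, hl, hr⟩, hord⟩

lemma card_filter_not_rootOrdered (hS : S.Nonempty) :
    ((treePairs S).filter fun p => ¬p.2.1.RootOrdered p.2.2).card =
      ((treePairs S).filter fun p => p.2.1.RootOrdered p.2.2).card := by
  have hswap {A l r} (hp : ⟨A, (l, r)⟩ ∈ treePairs S) : ⟨S \ A, (r, l)⟩ ∈ treePairs S := by
    obtain ⟨hAS, hl, hr⟩ := mem_treePairs.mp hp
    exact mem_treePairs.mpr ⟨Finset.sdiff_subset, hr, by rwa [Finset.sdiff_sdiff_eq_self hAS]⟩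
  have hinv {A l r} (hp : ⟨A, (l, r)⟩ ∈ treePairs S) : S \ (S \ A) = A :=
    Finset.sdiff_sdiff_eq_self (mem_treePairs.mp hp).1
  refine Finset.card_nbij' (fun p => ⟨S \ p.1, (p.2.2, p.2.1)⟩)
    (fun p => ⟨S \ p.1, (p.2.2, p.2.1)⟩) ?_ ?_ ?_ ?_
  · rintro ⟨A, l, r⟩ hp
    simp only [Finset.mem_coe, Finset.mem_filter] at hp ⊢
    exact ⟨hswap hp.1, (rootOrdered_swap_iff_of_mem_treePairs hS hp.1).mpr hp.2⟩
  · rintro ⟨A, l, r⟩ hp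
    simp only [Finset.mem_coe, Finset.mem_filter] at hp ⊢
    exact ⟨hswap hp.1, fun h => (rootOrdered_swap_iff_of_mem_treePairs hS hp.1).mp h hp.2⟩
  · rintro ⟨A, l, r⟩ hp
    simp [hinv (Finset.mem_filter.mp hp).1]
  · rintro ⟨A, l, r⟩ hp
    simp [hinv (Finset.mem_filter.mp hp).1]

lemma two_mul_card_treesOn_insert {x : ℕ} (hS : S.Nonempty) (hx : ∀ y ∈ S, x < y) :
    2 * (treesOn (insert x S)).card =
      ∑ A ∈ S.powerset, (treesOn A).card * (treesOn (S \ A)).card := by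
  rw [← card_treePairs, ← Finset.card_filter_add_card_filter_not
    (s := treePairs S) (fun p => p.2.1.RootOrdered p.2.2), card_filter_not_rootOrdered hS,
    card_treesOn_insert hx, two_mul]

end TreePairs

lemma card_treesOn_eq_card_zigzagPerms (S : Finset ℕ) :
    (treesOn S).card = (zigzagPerms true S).card := by
  revert S
  refine congrFun (eq_of_two_mul_insert_eq_sum ?_ ?_ (fun _ _ => two_mul_card_treesOn_insert)
    (fun _ _ => two_mul_card_zigzagPerms_insert))
  · simp [treesOn_empty, zigzagPerms_empty]
  · simp [treesOn_singleton, zigzagPerms_singleton]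

lemma eq_and_eq_Icc_of_insert_eq_Icc {a b n : ℕ} {R : Finset ℕ}
    (h : insert b R = Finset.Icc a n) (hR : ∀ y ∈ R, b < y) :
    b = a ∧ R = Finset.Icc (a + 1) n := by
  have hb : b ∈ Finset.Icc a n := h ▸ Finset.mem_insert_self b R
  rw [Finset.mem_Icc] at hb
  obtain rfl : b = a := by
    have ha : a ∈ insert b R := h ▸ Finset.mem_Icc.mpr ⟨le_rfl, hb.1.trans hb.2⟩
    rcases Finset.mem_insert.mp ha with ha | ha
    · exact ha.symm
    · exact absurd (hR a ha) (by omega)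
  refine ⟨rfl, ?_⟩
  rw [← Finset.erase_insert fun hbR => lt_irrefl b (hR b hbR), h, Finset.Icc_erase_left,
    Finset.Icc_add_one_left_eq_Ioc]

section MinPathTwo

variable {n : ℕ}

lemma Icc_one_eq_insert_Icc_two (hn : 1 ≤ n) : Finset.Icc 1 n = insert 1 (Finset.Icc 2 n) :=
  (Finset.insert_Icc_add_one_left_eq_Icc hn).symm

lemma one_lt_of_mem_Icc_two : ∀ y ∈ Finset.Icc 2 n, 1 < y := fun y hy => by
  rw [Finset.mem_Icc] at hy
  omega

lemma graft_two_mem_treesOn_Icc (hn : 2 ≤ n) {r : PTree} (hr : r ∈ treesOn (Finset.Icc 3 n)) :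
    PTree.graft 1 (.node 2 .nil .nil) r ∈ treesOn (Finset.Icc 1 n) ∧
      (PTree.graft 1 (.node 2 .nil .nil) r).minPathLen = 2 := by
  rw [Icc_one_eq_insert_Icc_two (by omega)]
  cases r with
  | nil =>
    rw [nil_mem_treesOn_iff, Finset.Icc_eq_empty_iff] at hr
    obtain rfl : n = 2 := by omega
    have hgraft : PTree.graft 1 (.node 2 .nil .nil) .nil = .node 1 .nil (.node 2 .nil .nil) := by
      simp [PTree.graft, PTree.RootOrdered]
    rw [hgraft, node_mem_treesOn_insert_iff one_lt_of_mem_Icc_two]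
    refine ⟨?_, rfl⟩
    simp [PTree.RootOrdered, PTree.labels, nil_mem_treesOn_iff, treesOn_singleton]
  | node c rl rr =>
    have hlab := (mem_treesOn.mp hr).2.2.1
    have hc : 3 ≤ c := by
      have := PTree.rootLabel_mem_labels (t := .node c rl rr) (by simp)
      rw [hlab, Finset.mem_Icc] at this
      exact this.1
    have hord : PTree.RootOrdered (.node 2 .nil .nil) (.node c rl rr) :=
      ⟨by simp, fun _ _ => by simp only [PTree.rootLabel]; omega⟩
    rw [PTree.graft, if_pos hord, node_mem_treesOn_insert_iff one_lt_of_mem_Icc_two,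
      PTree.minPathLen_node_of_rootOrdered hord]
    refine ⟨⟨rfl, hord, by simp [PTree.labels, treesOn_singleton], hlab ▸ hr, ?_, ?_⟩, rfl⟩
    · rw [hlab]
      simp [PTree.labels]
    · rw [hlab]
      ext y
      simp only [PTree.labels, Finset.empty_union, Finset.insert_empty, Finset.mem_union,
        Finset.mem_singleton, Finset.mem_Icc]
      omega

lemma exists_graft_two_eq_of_minPathLen_eq_two {t : PTree} (ht : t ∈ treesOn (Finset.Icc 1 n))
    (h2 : t.minPathLen = 2) :
    ∃ r ∈ treesOn (Finset.Icc 3 n), PTree.graft 1 (.node 2 .nil .nil) r = t := by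
  cases t with
  | nil => simp [PTree.minPathLen] at h2
  | node a l r =>
    have hn : 1 ≤ n := by
      have hsize := (mem_treesOn.mp ht).2.2.2
      simp only [PTree.size, Nat.card_Icc] at hsize
      omega
    rw [Icc_one_eq_insert_Icc_two hn] at ht
    obtain ⟨rfl, hord, hl, hr, hdisj, hLR⟩ :=
      (node_mem_treesOn_insert_iff one_lt_of_mem_Icc_two).mp ht
    rw [PTree.minPathLen_node_of_rootOrdered hord] at h2
    obtain ⟨b, hb⟩ := PTree.minPathLen_eq_one_iff.mp
      (show (if l = .nil then r else l).minPathLen = 1 by omega)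
    split_ifs at hb with hl0
    · subst hl0 hb
      obtain ⟨rfl, hR⟩ := eq_and_eq_Icc_of_insert_eq_Icc (R := ∅)
        (by simpa [PTree.labels] using hLR) (by simp)
      exact ⟨.nil, nil_mem_treesOn_iff.mpr hR.symm, by simp [PTree.graft, PTree.RootOrdered]⟩
    · subst hb
      have hbr : ∀ y ∈ r.labels, b < y := fun y hy =>
        (hord.2 hl0 fun h => hl0 (hord.1 h)).trans_le
          (PTree.rootLabel_le_of_mem_labels (mem_treesOn.mp hr).1 hy)
      obtain ⟨rfl, hR⟩ := eq_and_eq_Icc_of_insert_eq_Icc (by simpa [PTree.labels] using hLR) hbr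
      exact ⟨r, hR ▸ hr, by rw [PTree.graft, if_pos hord]⟩

lemma setOf_minPathLen_eq_two (hn : 2 ≤ n) :
    {t : PTree | t.IsBIT n ∧ t.StdOriented ∧ t.minPathLen = 2} =
      (treesOn (Finset.Icc 3 n)).image (PTree.graft 1 (.node 2 .nil .nil)) := by
  ext t
  simp only [Set.mem_ofPred_eq, Finset.coe_image, Set.mem_image, Finset.mem_coe, ← and_assoc,
    isBIT_and_stdOriented_iff]
  constructor
  · rintro ⟨ht, h2⟩
    exact exists_graft_two_eq_of_minPathLen_eq_two ht h2
  · rintro ⟨r, hr, rfl⟩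
    exact graft_two_mem_treesOn_Icc hn hr

end MinPathTwo

/-- the number of binary increasing trees of size n whose min-path
has exactly 2 nodes is the (n-1)-st Euler number e_{n-1}
(paper indexing: e₁ = e₂ = e₃ = 1, e₄ = 2, e₅ = 5, e₆ = 16, …). -/
theorem minPath_two_count (n : ℕ) (hn : 2 ≤ n) :
    minPathCount n 2 = paperEuler (n - 1) := by
  rw [minPathCount, setOf_minPathLen_eq_two hn, Set.ncard_coe_finset,
    Finset.card_image_of_injective _ (PTree.graft_injective 1 _),
    card_treesOn_eq_card_zigzagPerms, paperEuler, eulerNumber_eq_card_zigzagPerms,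
    card_zigzagPerms_Icc_add true 1 (n - 1 - 1) 2, show n - 1 - 1 + 2 = n by omega]

end Andre
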